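/- Let d ≥ 1 be an integer, 0 < τ < 1, ν ∈ (0, 1/6) and M > 0, and set ξ_τ = (1/2)log(1/τ). There exists C > 0 such that for every integer n ≥ 1, every z ∈ ∂E_τ^d and all u, v ∈ ℂ^d with |u|, |v| ≤ M·n^ν, the following holds. Put R = |Re z|² + (1/√n)·∑_{k=1}^d (u_k + conj v_k)·Re z_k + (1/(4n))·∑_{k=1}^d (u_k + conj v_k)² and S = |Im z|² + (1/√n)·∑_{k=1}^d (u_k − conj v_k)·conj(i·Im z_k) − (1/(4n))·∑_{k=1}^d (u_k − conj v_k)², and define z_± = √(sinh 2ξ_τ)·(√R ± i·√S) (principal square roots) and ẑ_± = √(sinh 2ξ_τ)·(|Re z| ± i·|Im z|). Then |z₊ − ẑ₊| ≤ C·n^{ν−1/2} and |z₋ − ẑ₋| ≤ C·n^{ν−1/2}. -/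

import Mathlib

open scoped BigOperators Real
open ComplexConjugate

/-- Principal square root (nonnegative real part). -/
noncomputable def csqrt (w : ℂ) : ℂ := w ^ ((1 : ℂ) / 2)

def edgeE (d : ℕ) (τ : ℝ) : Set (Fin d → ℂ) :=
  {z | (1 - τ) / (1 + τ) * (∑ k, (z k).re ^ 2) + (1 + τ) / (1 - τ) * (∑ k, (z k).im ^ 2) = 1}

noncomputable def normSqC {d : ℕ} (z : Fin d → ℂ) : ℝ := ∑ k, Complex.normSq (z k)

lemma csqrt_sq (w : ℂ) : csqrt w ^ 2 = w := by
  rcases eq_or_ne w 0 with h | h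
  · simp [csqrt, h, Complex.zero_cpow (by norm_num : (1:ℂ)/2 ≠ 0)]
  · rw [csqrt, sq, ← Complex.cpow_add _ _ h]; norm_num

lemma csqrt_re_nonneg (w : ℂ) : 0 ≤ (csqrt w).re := by
  rcases eq_or_ne w 0 with h | h
  · simp [csqrt, h, Complex.zero_cpow (by norm_num : (1:ℂ)/2 ≠ 0)]
  · rw [csqrt, Complex.cpow_def_of_ne_zero h, Complex.exp_re]
    apply mul_nonneg (Real.exp_nonneg _)
    have h1 : (Complex.log w * ((1:ℂ)/2)).im = w.arg / 2 := by
      simp [Complex.mul_im, Complex.log_im]; ring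
    rw [h1]
    apply Real.cos_nonneg_of_mem_Icc
    constructor
    · have := Complex.neg_pi_lt_arg w; linarith
    · have := Complex.arg_le_pi w; linarith

lemma csqrt_close (w : ℂ) (a ε : ℝ) (ha : 0 ≤ a) (hε : 0 ≤ ε)
    (h : ‖w - (a:ℂ)‖ ≤ ε * Real.sqrt a + ε^2/4) :
    ‖csqrt w - ((Real.sqrt a : ℝ) : ℂ)‖ ≤ 2 * ε := by
  set s := csqrt w with hs
  set t : ℂ := ((Real.sqrt a : ℝ) : ℂ) with htdef
  have hre : 0 ≤ s.re := csqrt_re_nonneg w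
  have ht2 : t ^ 2 = (a : ℂ) := by
    rw [htdef, ← Complex.ofReal_pow, Real.sq_sqrt ha]
  have key : ‖s - t‖ * ‖s + t‖ = ‖w - (a:ℂ)‖ := by
    rw [← norm_mul]; congr 1
    calc (s - t) * (s + t) = s^2 - t^2 := by ring
      _ = w - (a:ℂ) := by rw [csqrt_sq w, ht2]
  have hA0 : 0 ≤ ‖s - t‖ := norm_nonneg _
  rcases le_or_gt (Real.sqrt a) ε with hcase | hcase
  · have hle : ‖s - t‖ ≤ ‖s + t‖ := by
      rw [Complex.norm_def, Complex.norm_def]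
      apply Real.sqrt_le_sqrt
      have htim : t.im = 0 := by simp [htdef]
      have htre : 0 ≤ t.re := by rw [htdef]; simpa using Real.sqrt_nonneg a
      simp only [Complex.normSq_apply, Complex.sub_re, Complex.sub_im, Complex.add_re,
        Complex.add_im, htim]
      nlinarith [mul_nonneg hre htre]
    have hsq : ‖s - t‖^2 ≤ ε*ε + ε^2/4 := by
      calc ‖s-t‖^2 = ‖s-t‖ * ‖s-t‖ := sq _
        _ ≤ ‖s-t‖ * ‖s+t‖ := mul_le_mul_of_nonneg_left hle hA0
        _ = ‖w - (a:ℂ)‖ := key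
        _ ≤ ε * Real.sqrt a + ε^2/4 := h
        _ ≤ ε*ε + ε^2/4 := by nlinarith
    nlinarith
  · have hsa : 0 < Real.sqrt a := lt_of_le_of_lt hε hcase
    have habs : Real.sqrt a ≤ ‖s + t‖ := by
      have h1 := Complex.re_le_norm (s + t)
      have h2 : (s + t).re = s.re + Real.sqrt a := by
        rw [htdef]; simp [Complex.add_re]
      rw [h2] at h1; linarith
    have hmain : ‖s - t‖ * Real.sqrt a ≤ ε * Real.sqrt a + ε^2/4 := by
      calc ‖s-t‖ * Real.sqrt a ≤ ‖s-t‖ * ‖s+t‖ :=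
            mul_le_mul_of_nonneg_left habs hA0
        _ = ‖w - (a:ℂ)‖ := key
        _ ≤ _ := h
    nlinarith [mul_nonneg hε hsa.le]

lemma abs_sum_mul_le {d : ℕ} (c : Fin d → ℂ) (r : Fin d → ℝ) :
    ‖∑ k, c k * ((r k : ℝ) : ℂ)‖ ≤
      Real.sqrt (∑ k, ‖c k‖ ^ 2) * Real.sqrt (∑ k, r k ^ 2) := by
  have h1 : ‖∑ k, c k * ((r k : ℝ):ℂ)‖ ≤ ∑ k, ‖c k‖ * |r k| := by
    refine le_trans (norm_sum_le _ _) (le_of_eq ?_)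
    exact Finset.sum_congr rfl fun k _ => by rw [norm_mul, Complex.norm_real, Real.norm_eq_abs]
  have h2 : (∑ k, ‖c k‖ * |r k|)^2 ≤
      (∑ k, ‖c k‖^2) * (∑ k, |r k|^2) :=
    Finset.sum_mul_sq_le_sq_mul_sq _ _ _
  have h3 : (∑ k, |r k|^2) = ∑ k, r k ^2 := by simp [sq_abs]
  have hnn : 0 ≤ ∑ k, ‖c k‖ * |r k| :=
    Finset.sum_nonneg fun k _ => mul_nonneg (norm_nonneg _) (abs_nonneg _)
  calc ‖∑ k, c k * ((r k : ℝ):ℂ)‖ ≤ ∑ k, ‖c k‖ * |r k| := h1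
    _ = Real.sqrt ((∑ k, ‖c k‖ * |r k|)^2) := (Real.sqrt_sq hnn).symm
    _ ≤ Real.sqrt ((∑ k, ‖c k‖^2) * (∑ k, |r k|^2)) := Real.sqrt_le_sqrt h2
    _ = _ := by rw [h3, Real.sqrt_mul (Finset.sum_nonneg fun k _ => sq_nonneg _)]

lemma abs_add_sq_le' (x y : ℂ) :
    ‖x + y‖^2 ≤ 2 * Complex.normSq x + 2 * Complex.normSq y := by
  have h := norm_add_le x y
  have hx := Complex.sq_norm x
  have hy := Complex.sq_norm y
  nlinarith [norm_nonneg (x+y), norm_nonneg x, norm_nonneg y,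
    sq_nonneg (‖x‖ - ‖y‖)]

lemma sum_abs_add_sq_le {d : ℕ} (u v : Fin d → ℂ) (B : ℝ)
    (hu2 : normSqC u ≤ B^2) (hv2 : normSqC v ≤ B^2) :
    ∑ k, ‖u k + conj (v k)‖ ^ 2 ≤ 4 * B^2 := by
  have hpt : ∀ k, ‖u k + conj (v k)‖ ^ 2 ≤
      2 * Complex.normSq (u k) + 2 * Complex.normSq (v k) := by
    intro k
    have := abs_add_sq_le' (u k) (conj (v k))
    rwa [Complex.normSq_conj] at this
  calc ∑ k, ‖u k + conj (v k)‖ ^ 2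
      ≤ ∑ k, (2 * Complex.normSq (u k) + 2 * Complex.normSq (v k)) :=
        Finset.sum_le_sum fun k _ => hpt k
    _ = 2 * normSqC u + 2 * normSqC v := by
        rw [Finset.sum_add_distrib, ← Finset.mul_sum, ← Finset.mul_sum]; rfl
    _ ≤ 4 * B^2 := by linarith

lemma sum_abs_sub_sq_le {d : ℕ} (u v : Fin d → ℂ) (B : ℝ)
    (hu2 : normSqC u ≤ B^2) (hv2 : normSqC v ≤ B^2) :
    ∑ k, ‖u k - conj (v k)‖ ^ 2 ≤ 4 * B^2 := by
  have hpt : ∀ k, ‖u k - conj (v k)‖ ^ 2 ≤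
      2 * Complex.normSq (u k) + 2 * Complex.normSq (v k) := by
    intro k
    have := abs_add_sq_le' (u k) (-conj (v k))
    rw [Complex.normSq_neg, Complex.normSq_conj] at this
    simpa [sub_eq_add_neg] using this
  calc ∑ k, ‖u k - conj (v k)‖ ^ 2
      ≤ ∑ k, (2 * Complex.normSq (u k) + 2 * Complex.normSq (v k)) :=
        Finset.sum_le_sum fun k _ => hpt k
    _ = 2 * normSqC u + 2 * normSqC v := by
        rw [Finset.sum_add_distrib, ← Finset.mul_sum, ← Finset.mul_sum]; rfl
    _ ≤ 4 * B^2 := by linarith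

lemma final_pair (c0 : ℝ) (hc0 : 0 ≤ c0) (R S : ℂ) (a b ε : ℝ)
    (hR : ‖csqrt R - ((Real.sqrt a : ℝ):ℂ)‖ ≤ 2*ε)
    (hS : ‖csqrt S - ((Real.sqrt b : ℝ):ℂ)‖ ≤ 2*ε) :
    ‖((c0:ℝ):ℂ) * (csqrt R + Complex.I * csqrt S) -
      ((c0:ℝ):ℂ) * (((Real.sqrt a : ℝ):ℂ) + Complex.I * ((Real.sqrt b : ℝ):ℂ))‖ ≤ c0 * (4*ε) ∧
    ‖((c0:ℝ):ℂ) * (csqrt R - Complex.I * csqrt S) -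
      ((c0:ℝ):ℂ) * (((Real.sqrt a : ℝ):ℂ) - Complex.I * ((Real.sqrt b : ℝ):ℂ))‖ ≤ c0 * (4*ε) := by
  constructor
  · have heq : ((c0:ℝ):ℂ) * (csqrt R + Complex.I * csqrt S) -
        ((c0:ℝ):ℂ) * (((Real.sqrt a : ℝ):ℂ) + Complex.I * ((Real.sqrt b : ℝ):ℂ)) =
        ((c0:ℝ):ℂ) * ((csqrt R - ((Real.sqrt a : ℝ):ℂ)) +
          Complex.I * (csqrt S - ((Real.sqrt b : ℝ):ℂ))) := by ring
    rw [heq, norm_mul, Complex.norm_real, Real.norm_eq_abs, abs_of_nonneg hc0]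
    refine mul_le_mul_of_nonneg_left ?_ hc0
    calc ‖(csqrt R - ((Real.sqrt a : ℝ):ℂ)) +
          Complex.I * (csqrt S - ((Real.sqrt b : ℝ):ℂ))‖
        ≤ ‖csqrt R - ((Real.sqrt a : ℝ):ℂ)‖ +
          ‖Complex.I * (csqrt S - ((Real.sqrt b : ℝ):ℂ))‖ := norm_add_le _ _
      _ = ‖csqrt R - ((Real.sqrt a : ℝ):ℂ)‖ +
          ‖csqrt S - ((Real.sqrt b : ℝ):ℂ)‖ := by
            rw [norm_mul, Complex.norm_I, one_mul]
      _ ≤ 2*ε + 2*ε := add_le_add hR hS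
      _ = 4*ε := by ring
  · have heq : ((c0:ℝ):ℂ) * (csqrt R - Complex.I * csqrt S) -
        ((c0:ℝ):ℂ) * (((Real.sqrt a : ℝ):ℂ) - Complex.I * ((Real.sqrt b : ℝ):ℂ)) =
        ((c0:ℝ):ℂ) * ((csqrt R - ((Real.sqrt a : ℝ):ℂ)) +
          (-Complex.I) * (csqrt S - ((Real.sqrt b : ℝ):ℂ))) := by ring
    rw [heq, norm_mul, Complex.norm_real, Real.norm_eq_abs, abs_of_nonneg hc0]
    refine mul_le_mul_of_nonneg_left ?_ hc0
    calc ‖(csqrt R - ((Real.sqrt a : ℝ):ℂ)) +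
          (-Complex.I) * (csqrt S - ((Real.sqrt b : ℝ):ℂ))‖
        ≤ ‖csqrt R - ((Real.sqrt a : ℝ):ℂ)‖ +
          ‖(-Complex.I) * (csqrt S - ((Real.sqrt b : ℝ):ℂ))‖ := norm_add_le _ _
      _ = ‖csqrt R - ((Real.sqrt a : ℝ):ℂ)‖ +
          ‖csqrt S - ((Real.sqrt b : ℝ):ℂ)‖ := by
            rw [norm_mul, norm_neg, Complex.norm_I, one_mul]
      _ ≤ 2*ε + 2*ε := add_le_add hR hS
      _ = 4*ε := by ring
set_option maxHeartbeats 1000000 in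
/-- The rescaled elliptic coordinates `z_±` stay uniformly close to their limits `ẑ_±`. -/
theorem stmt_18 (d : ℕ) (hd : 1 ≤ d) (τ ν M : ℝ) (hτ0 : 0 < τ) (hτ1 : τ < 1)
    (hν0 : 0 < ν) (hν1 : ν < 1 / 6) (hM : 0 < M) :
    ∃ C : ℝ, 0 < C ∧
      ∀ n : ℕ, 1 ≤ n → ∀ z ∈ edgeE d τ, ∀ u v : Fin d → ℂ,
        Real.sqrt (normSqC u) ≤ M * (n : ℝ) ^ ν → Real.sqrt (normSqC v) ≤ M * (n : ℝ) ^ ν →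
          (let ξτ : ℝ := Real.log (1 / τ) / 2
           let R : ℂ :=
             ((∑ k, (z k).re ^ 2 : ℝ) : ℂ) +
               (1 / (Real.sqrt n : ℂ)) * ∑ k, (u k + conj (v k)) * ((z k).re : ℂ) +
               (1 / (4 * (n : ℂ))) * ∑ k, (u k + conj (v k)) ^ 2
           let S : ℂ :=
             ((∑ k, (z k).im ^ 2 : ℝ) : ℂ) -
               (Complex.I / (Real.sqrt n : ℂ)) * ∑ k, (u k - conj (v k)) * ((z k).im : ℂ) -
               (1 / (4 * (n : ℂ))) * ∑ k, (u k - conj (v k)) ^ 2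
           let zP : ℂ := ((Real.sqrt (Real.sinh (2 * ξτ)) : ℝ) : ℂ) * (csqrt R + Complex.I * csqrt S)
           let zM : ℂ := ((Real.sqrt (Real.sinh (2 * ξτ)) : ℝ) : ℂ) * (csqrt R - Complex.I * csqrt S)
           let zPhat : ℂ := ((Real.sqrt (Real.sinh (2 * ξτ)) : ℝ) : ℂ) *
             (((Real.sqrt (∑ k, (z k).re ^ 2) : ℝ) : ℂ) +
               Complex.I * ((Real.sqrt (∑ k, (z k).im ^ 2) : ℝ) : ℂ))
           let zMhat : ℂ := ((Real.sqrt (Real.sinh (2 * ξτ)) : ℝ) : ℂ) *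
             (((Real.sqrt (∑ k, (z k).re ^ 2) : ℝ) : ℂ) -
               Complex.I * ((Real.sqrt (∑ k, (z k).im ^ 2) : ℝ) : ℂ))
           ‖zP - zPhat‖ ≤ C * (n : ℝ) ^ (ν - 1 / 2) ∧
           ‖zM - zMhat‖ ≤ C * (n : ℝ) ^ (ν - 1 / 2)) := by
  refine ⟨8 * Real.sqrt (Real.sinh (2 * (Real.log (1 / τ) / 2))) * M + 1,
    by nlinarith [Real.sqrt_nonneg (Real.sinh (2 * (Real.log (1 / τ) / 2)))], ?_⟩
  intro n hn z hz u v hu hv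
  simp only []
  set c0 : ℝ := Real.sqrt (Real.sinh (2 * (Real.log (1 / τ) / 2))) with hc0def
  have hc0 : 0 ≤ c0 := Real.sqrt_nonneg _
  have hN1 : (1:ℝ) ≤ (n:ℝ) := by exact_mod_cast hn
  have hN0 : (0:ℝ) < (n:ℝ) := by linarith
  set N : ℝ := (n:ℝ) with hNdef
  set a : ℝ := ∑ k, (z k).re ^ 2 with hadef
  set b : ℝ := ∑ k, (z k).im ^ 2 with hbdef
  have ha : 0 ≤ a := Finset.sum_nonneg fun k _ => sq_nonneg _
  have hb : 0 ≤ b := Finset.sum_nonneg fun k _ => sq_nonneg _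
  set B : ℝ := M * N ^ ν with hBdef
  have hB0 : 0 ≤ B := le_trans (Real.sqrt_nonneg _) hu
  set t : ℝ := N ^ (ν - 1/2) with htdef
  have ht0 : (0:ℝ) < t := Real.rpow_pos_of_pos hN0 _
  set ε : ℝ := 2 * M * t with hεdef
  have hε0 : 0 ≤ ε := by positivity
  have hsN : (0:ℝ) < Real.sqrt N := Real.sqrt_pos.mpr hN0
  have ht1 : t * Real.sqrt N = N ^ ν := by
    rw [htdef, Real.sqrt_eq_rpow, ← Real.rpow_add hN0]
    congr 1; ring
  have hNsq : Real.sqrt N * Real.sqrt N = N := Real.mul_self_sqrt hN0.le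
  -- squared norm bounds
  have hu2 : normSqC u ≤ B^2 := by
    have h0 : (0:ℝ) ≤ normSqC u := Finset.sum_nonneg fun k _ => Complex.normSq_nonneg _
    have := Real.sq_sqrt h0
    nlinarith [Real.sqrt_nonneg (normSqC u)]
  have hv2 : normSqC v ≤ B^2 := by
    have h0 : (0:ℝ) ≤ normSqC v := Finset.sum_nonneg fun k _ => Complex.normSq_nonneg _
    have := Real.sq_sqrt h0
    nlinarith [Real.sqrt_nonneg (normSqC v)]
  have hCR : ∑ k, ‖u k + conj (v k)‖ ^ 2 ≤ 4 * B^2 :=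
    sum_abs_add_sq_le u v B hu2 hv2
  have hCS : ∑ k, ‖u k - conj (v k)‖ ^ 2 ≤ 4 * B^2 :=
    sum_abs_sub_sq_le u v B hu2 hv2
  have hsqCR : Real.sqrt (∑ k, ‖u k + conj (v k)‖ ^ 2) ≤ 2 * B := by
    rw [show 4*B^2 = (2*B)^2 by ring] at hCR
    calc Real.sqrt (∑ k, ‖u k + conj (v k)‖ ^ 2)
        ≤ Real.sqrt ((2*B)^2) := Real.sqrt_le_sqrt hCR
      _ = 2*B := Real.sqrt_sq (by positivity)
  have hsqCS : Real.sqrt (∑ k, ‖u k - conj (v k)‖ ^ 2) ≤ 2 * B := by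
    rw [show 4*B^2 = (2*B)^2 by ring] at hCS
    calc Real.sqrt (∑ k, ‖u k - conj (v k)‖ ^ 2)
        ≤ Real.sqrt ((2*B)^2) := Real.sqrt_le_sqrt hCS
      _ = 2*B := Real.sqrt_sq (by positivity)
  -- linear term bounds
  have hLR : ‖∑ k, (u k + conj (v k)) * ((z k).re : ℂ)‖ ≤ 2*B * Real.sqrt a := by
    refine le_trans (abs_sum_mul_le (fun k => u k + conj (v k)) (fun k => (z k).re)) ?_
    exact mul_le_mul_of_nonneg_right hsqCR (Real.sqrt_nonneg _)
  have hLS : ‖∑ k, (u k - conj (v k)) * ((z k).im : ℂ)‖ ≤ 2*B * Real.sqrt b := by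
    refine le_trans (abs_sum_mul_le (fun k => u k - conj (v k)) (fun k => (z k).im)) ?_
    exact mul_le_mul_of_nonneg_right hsqCS (Real.sqrt_nonneg _)
  -- quadratic term bounds
  have hQR : ‖∑ k, (u k + conj (v k)) ^ 2‖ ≤ 4 * B^2 := by
    refine le_trans (norm_sum_le _ _) (le_trans (le_of_eq ?_) hCR)
    exact Finset.sum_congr rfl fun k _ => by rw [norm_pow]
  have hQS : ‖∑ k, (u k - conj (v k)) ^ 2‖ ≤ 4 * B^2 := by
    refine le_trans (norm_sum_le _ _) (le_trans (le_of_eq ?_) hCS)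
    exact Finset.sum_congr rfl fun k _ => by rw [norm_pow]
  -- coefficient absolute values
  have hsabs : ‖((Real.sqrt N : ℝ):ℂ)‖ = Real.sqrt N := by
    rw [Complex.norm_real, Real.norm_eq_abs, abs_of_nonneg hsN.le]
  have h4n : ‖4 * (n:ℂ)‖ = 4 * N := by
    rw [show (4 * (n:ℂ)) = (((4 * N : ℝ)):ℂ) by rw [hNdef]; push_cast; ring,
      Complex.norm_real, Real.norm_eq_abs, abs_of_nonneg (by positivity)]
  -- combination equality
  have hcomb : (1/Real.sqrt N) * (2*B*Real.sqrt a) + (1/(4*N)) * (4*B^2)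
      = ε * Real.sqrt a + ε^2/4 := by
    rw [hBdef, ← ht1, hεdef]
    have e1 : (1/Real.sqrt N) * (2*(M*(t*Real.sqrt N))*Real.sqrt a) = 2*M*t*Real.sqrt a := by
      field_simp
    have e2 : (1/(4*N)) * (4*(M*(t*Real.sqrt N))^2) = (2*M*t)^2/4 := by
      calc (1/(4*N)) * (4*(M*(t*Real.sqrt N))^2)
          = M^2*t^2*(Real.sqrt N*Real.sqrt N)/N := by ring
        _ = M^2*t^2*N/N := by rw [hNsq]
        _ = (2*M*t)^2/4 := by field_simp; ring
    rw [e1, e2]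
  have hcombb : (1/Real.sqrt N) * (2*B*Real.sqrt b) + (1/(4*N)) * (4*B^2)
      = ε * Real.sqrt b + ε^2/4 := by
    rw [hBdef, ← ht1, hεdef]
    have e1 : (1/Real.sqrt N) * (2*(M*(t*Real.sqrt N))*Real.sqrt b) = 2*M*t*Real.sqrt b := by
      field_simp
    have e2 : (1/(4*N)) * (4*(M*(t*Real.sqrt N))^2) = (2*M*t)^2/4 := by
      calc (1/(4*N)) * (4*(M*(t*Real.sqrt N))^2)
          = M^2*t^2*(Real.sqrt N*Real.sqrt N)/N := by ring
        _ = M^2*t^2*N/N := by rw [hNsq]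
        _ = (2*M*t)^2/4 := by field_simp; ring
    rw [e1, e2]
  -- R bound
  set Rex : ℂ := ((a : ℝ) : ℂ) +
      (1 / ((Real.sqrt N : ℝ) : ℂ)) * ∑ k, (u k + conj (v k)) * ((z k).re : ℂ) +
      (1 / (4 * (n : ℂ))) * ∑ k, (u k + conj (v k)) ^ 2 with hRexdef
  set Sex : ℂ := ((b : ℝ) : ℂ) -
      (Complex.I / ((Real.sqrt N : ℝ) : ℂ)) * ∑ k, (u k - conj (v k)) * ((z k).im : ℂ) -
      (1 / (4 * (n : ℂ))) * ∑ k, (u k - conj (v k)) ^ 2 with hSexdef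
  have hRa : ‖Rex - ((a:ℝ):ℂ)‖ ≤ ε * Real.sqrt a + ε^2/4 := by
    have hdec : Rex - ((a:ℝ):ℂ) =
        (1 / ((Real.sqrt N : ℝ):ℂ)) * (∑ k, (u k + conj (v k)) * ((z k).re : ℂ)) +
        (1 / (4 * (n:ℂ))) * (∑ k, (u k + conj (v k)) ^ 2) := by
      rw [hRexdef]; ring
    rw [hdec]
    calc ‖_‖
        ≤ ‖(1 / ((Real.sqrt N : ℝ):ℂ)) * (∑ k, (u k + conj (v k)) * ((z k).re : ℂ))‖
          + ‖(1 / (4 * (n:ℂ))) * (∑ k, (u k + conj (v k)) ^ 2)‖ :=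
          norm_add_le _ _
      _ = (1/Real.sqrt N) * ‖∑ k, (u k + conj (v k)) * ((z k).re : ℂ)‖
          + (1/(4*N)) * ‖∑ k, (u k + conj (v k)) ^ 2‖ := by
          rw [norm_mul, norm_mul, norm_div, norm_div, norm_one, hsabs, h4n]
      _ ≤ (1/Real.sqrt N) * (2*B*Real.sqrt a) + (1/(4*N)) * (4*B^2) := by
          refine add_le_add (mul_le_mul_of_nonneg_left hLR (by positivity))
            (mul_le_mul_of_nonneg_left hQR (by positivity))
      _ = ε * Real.sqrt a + ε^2/4 := hcomb
  have hSb : ‖Sex - ((b:ℝ):ℂ)‖ ≤ ε * Real.sqrt b + ε^2/4 := by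
    have hdec : Sex - ((b:ℝ):ℂ) =
        (-(Complex.I / ((Real.sqrt N : ℝ):ℂ))) * (∑ k, (u k - conj (v k)) * ((z k).im : ℂ)) +
        (-(1 / (4 * (n:ℂ)))) * (∑ k, (u k - conj (v k)) ^ 2) := by
      rw [hSexdef]; ring
    rw [hdec]
    calc ‖_‖
        ≤ ‖(-(Complex.I / ((Real.sqrt N : ℝ):ℂ))) *
            (∑ k, (u k - conj (v k)) * ((z k).im : ℂ))‖
          + ‖(-(1 / (4 * (n:ℂ)))) * (∑ k, (u k - conj (v k)) ^ 2)‖ :=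
          norm_add_le _ _
      _ = (1/Real.sqrt N) * ‖∑ k, (u k - conj (v k)) * ((z k).im : ℂ)‖
          + (1/(4*N)) * ‖∑ k, (u k - conj (v k)) ^ 2‖ := by
          rw [norm_mul, norm_mul, norm_neg, norm_neg, norm_div, norm_div, norm_one,
            Complex.norm_I, hsabs, h4n]
      _ ≤ (1/Real.sqrt N) * (2*B*Real.sqrt b) + (1/(4*N)) * (4*B^2) := by
          refine add_le_add (mul_le_mul_of_nonneg_left hLS (by positivity))
            (mul_le_mul_of_nonneg_left hQS (by positivity))
      _ = ε * Real.sqrt b + ε^2/4 := hcombb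
  have hclR : ‖csqrt Rex - ((Real.sqrt a : ℝ):ℂ)‖ ≤ 2 * ε :=
    csqrt_close Rex a ε ha hε0 hRa
  have hclS : ‖csqrt Sex - ((Real.sqrt b : ℝ):ℂ)‖ ≤ 2 * ε :=
    csqrt_close Sex b ε hb hε0 hSb
  have hfp := final_pair c0 hc0 Rex Sex a b ε hclR hclS
  have hCb : c0 * (4 * ε) ≤ (8 * c0 * M + 1) * t := by
    rw [hεdef]; nlinarith [mul_nonneg hc0 (mul_nonneg hM.le ht0.le)]
  exact ⟨hfp.1.trans hCb, hfp.2.trans hCb⟩
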